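/- For every integer n ≥ 2 and all elements p, q of R_n = ℚ[x, y₁, …, yₙ]/(x·y₁, …, x·yₙ) that lie in the ideal of R_n generated by x̄, ȳ₁, …, ȳₙ, the sequence [p, q] is not a (weakly) regular sequence on R_n; that is, if p is a non-zero-divisor of R_n then the image of q in R_n/(p) is a zero-divisor. (Hence the depth of the irrelevant ideal of R_n is at most 1, while the Krull dimension of R_n is n, so R_n is not Cohen–Macaulay.) -/

import Mathlib

/-!
Setting the `yᵢ` to zero (`killY`) and setting `x` to zero (`killX`) embed `R_n` into
`ℚ[x] × ℚ[y₁, …, yₙ]`, and the two components of an element have the same constant term.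
Let `π` be the endomorphism of `R_n` setting the `yᵢ` to zero. For `p, q` in the irrelevant
ideal, `q · π p = p · π q`, as both sides vanish on the `y`-component. If `q` is regular
modulo `p`, this gives `π p = r p`. A non-zero-divisor `p` has both components nonzero
(otherwise `x̄ p = 0` or `ȳ₁ p = 0`), so `r` has `x`-component `1` and `y`-component `0`,
contradicting the equality of constant terms.
-/

open MvPolynomial

/-- The ideal `(x·y₁, …, x·yₙ)` in `ℚ[x, y₁, …, yₙ]`, where `x = X 0` and
`yᵢ = X i.succ` in `MvPolynomial (Fin (n+1)) ℚ`. -/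
noncomputable def relIdeal (n : ℕ) : Ideal (MvPolynomial (Fin (n + 1)) ℚ) :=
  Ideal.span (Set.range fun i : Fin n => X 0 * X i.succ)

/-- The ring `R_n = ℚ[x, y₁, …, yₙ]/(x·y₁, …, x·yₙ)`. -/
abbrev Rring (n : ℕ) := MvPolynomial (Fin (n + 1)) ℚ ⧸ relIdeal n

/-- The "irrelevant" ideal of `R_n`, generated by the images `x̄, ȳ₁, …, ȳₙ`
of all the variables. -/
noncomputable def irrelevantIdeal (n : ℕ) : Ideal (Rring n) :=
  Ideal.span (Set.range fun i : Fin (n + 1) => Ideal.Quotient.mk (relIdeal n) (X i))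

theorem MvPolynomial.sub_aeval_mem {σ R : Type*} [CommRing R] {I : Ideal (MvPolynomial σ R)}
    {s : σ → MvPolynomial σ R} (hs : ∀ i, X i - s i ∈ I) (f : MvPolynomial σ R) :
    f - aeval s f ∈ I := by
  have : (Ideal.Quotient.mkₐ R I).comp (aeval s) = Ideal.Quotient.mkₐ R I :=
    algHom_ext fun i => by simpa using (Ideal.Quotient.eq.2 (hs i)).symm
  rw [← Ideal.Quotient.eq, ← Ideal.Quotient.mkₐ_eq_mk R, ← AlgHom.comp_apply, this]

theorem Ideal.mem_of_mul_mem_of_mk_mem_nonZeroDivisors {R : Type*} [CommRing R] {I : Ideal R}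
    {q a : R} (hq : Ideal.Quotient.mk I q ∈ nonZeroDivisors (R ⧸ I)) (h : q * a ∈ I) :
    a ∈ I := by
  rw [← Ideal.Quotient.eq_zero_iff_mem, map_mul] at h
  exact Ideal.Quotient.eq_zero_iff_mem.1 (mem_nonZeroDivisors_iff_left.1 hq _ h)

namespace Rring

variable {n : ℕ}

noncomputable def yIdeal (n : ℕ) : Ideal (MvPolynomial (Fin (n + 1)) ℚ) :=
  Ideal.span (Set.range fun i : Fin n => X i.succ)

noncomputable def substYZero (n : ℕ) : Fin (n + 1) → MvPolynomial (Fin (n + 1)) ℚ :=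
  Fin.cases (X 0) 0

noncomputable def substXZero (n : ℕ) : Fin (n + 1) → MvPolynomial (Fin (n + 1)) ℚ :=
  Fin.cases 0 fun i => X i.succ

@[simp] lemma substYZero_zero : substYZero n 0 = X 0 := rfl
@[simp] lemma substYZero_succ (i : Fin n) : substYZero n i.succ = 0 := rfl
@[simp] lemma substXZero_zero : substXZero n 0 = 0 := rfl
@[simp] lemma substXZero_succ (i : Fin n) : substXZero n i.succ = X i.succ := rfl

lemma sub_aeval_substYZero_mem_yIdeal (f : MvPolynomial (Fin (n + 1)) ℚ) :
    f - aeval (substYZero n) f ∈ yIdeal n := by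
  refine sub_aeval_mem (fun i => ?_) f
  cases i using Fin.cases with
  | zero => simp
  | succ j => simpa [yIdeal] using Ideal.subset_span (Set.mem_range_self j)

lemma sub_aeval_substXZero_mem_span_X_zero (f : MvPolynomial (Fin (n + 1)) ℚ) :
    f - aeval (substXZero n) f ∈ Ideal.span {X 0} := by
  refine sub_aeval_mem (fun i => ?_) f
  cases i using Fin.cases <;> simp

lemma X_zero_mul_mem_relIdeal {z : MvPolynomial (Fin (n + 1)) ℚ} (hz : z ∈ yIdeal n) :
    X 0 * z ∈ relIdeal n := by
  obtain ⟨c, rfl⟩ := Ideal.mem_span_range_iff_exists_fun.1 hz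
  refine Ideal.mem_span_range_iff_exists_fun.2 ⟨c, ?_⟩
  simp only [Finset.mul_sum, mul_left_comm]

lemma relIdeal_le_ker_aeval_substYZero : relIdeal n ≤ RingHom.ker (aeval (substYZero n)) := by
  rw [relIdeal, Ideal.span_le]
  rintro _ ⟨i, rfl⟩
  simp

lemma relIdeal_le_ker_aeval_substXZero : relIdeal n ≤ RingHom.ker (aeval (substXZero n)) := by
  rw [relIdeal, Ideal.span_le]
  rintro _ ⟨i, rfl⟩
  simp

variable (n) in
noncomputable def killY : Rring n →+* MvPolynomial (Fin (n + 1)) ℚ :=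
  Ideal.Quotient.lift _ (aeval (substYZero n)).toRingHom fun _ h =>
    relIdeal_le_ker_aeval_substYZero h

variable (n) in
noncomputable def killX : Rring n →+* MvPolynomial (Fin (n + 1)) ℚ :=
  Ideal.Quotient.lift _ (aeval (substXZero n)).toRingHom fun _ h =>
    relIdeal_le_ker_aeval_substXZero h

@[simp] lemma killY_mk (f : MvPolynomial (Fin (n + 1)) ℚ) :
    killY n (Ideal.Quotient.mk _ f) = aeval (substYZero n) f := rfl

@[simp] lemma killX_mk (f : MvPolynomial (Fin (n + 1)) ℚ) :
    killX n (Ideal.Quotient.mk _ f) = aeval (substXZero n) f := rfl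

lemma eq_zero_of_killY_eq_zero_of_killX_eq_zero {a : Rring n} (hY : killY n a = 0)
    (hX : killX n a = 0) : a = 0 := by
  obtain ⟨f, rfl⟩ := Ideal.Quotient.mk_surjective a
  rw [killY_mk] at hY
  rw [killX_mk] at hX
  obtain ⟨s, rfl⟩ : X 0 ∣ f := by
    rw [← Ideal.mem_span_singleton, ← sub_zero f, ← hX]
    exact sub_aeval_substXZero_mem_span_X_zero f
  have hsY : aeval (substYZero n) s = 0 := by
    simpa [X_ne_zero] using hY
  have hs : s ∈ yIdeal n := by
    simpa only [hsY, sub_zero] using sub_aeval_substYZero_mem_yIdeal s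
  exact Ideal.Quotient.eq_zero_iff_mem.2 (X_zero_mul_mem_relIdeal hs)

lemma ext_killY_killX {a b : Rring n} (hY : killY n a = killY n b) (hX : killX n a = killX n b) :
    a = b :=
  sub_eq_zero.1 <| eq_zero_of_killY_eq_zero_of_killX_eq_zero (by simp [hY]) (by simp [hX])

variable (n) in
noncomputable def projX : Rring n →+* Rring n :=
  (Ideal.Quotient.mk _).comp (killY n)

lemma killY_projX (a : Rring n) : killY n (projX n a) = killY n a := by
  obtain ⟨f, rfl⟩ := Ideal.Quotient.mk_surjective a
  have h : (fun i => aeval (substYZero n) (substYZero n i)) = substYZero n := by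
    funext i
    cases i using Fin.cases <;> simp
  simp only [projX, RingHom.comp_apply, killY_mk, comp_aeval_apply, h]

lemma killX_projX_of_mem {a : Rring n} (ha : a ∈ irrelevantIdeal n) :
    killX n (projX n a) = 0 := by
  suffices irrelevantIdeal n ≤ RingHom.ker ((killX n).comp (projX n)) from this ha
  rw [irrelevantIdeal, Ideal.span_le]
  rintro _ ⟨i, rfl⟩
  cases i using Fin.cases <;> simp [projX]

lemma mul_projX_comm {p q : Rring n} (hp : p ∈ irrelevantIdeal n) (hq : q ∈ irrelevantIdeal n) :
    q * projX n p = p * projX n q :=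
  ext_killY_killX (by simp [killY_projX, mul_comm]) (by simp [killX_projX_of_mem, hp, hq])

lemma constantCoeff_killY_eq_constantCoeff_killX (a : Rring n) :
    constantCoeff (killY n a) = constantCoeff (killX n a) := by
  suffices constantCoeff.comp (killY n) = constantCoeff.comp (killX n) from
    DFunLike.congr_fun this a
  refine Ideal.Quotient.ringHom_ext (ringHom_ext (by simp) fun i => ?_)
  cases i using Fin.cases <;> simp

lemma killY_ne_zero_of_mem_nonZeroDivisors {p : Rring n} (hp : p ∈ nonZeroDivisors (Rring n)) :
    killY n p ≠ 0 := by
  intro h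
  have hx : Ideal.Quotient.mk (relIdeal n) (X 0) = 0 :=
    mem_nonZeroDivisors_iff_right.1 hp _ (ext_killY_killX (by simp [h]) (by simp))
  simpa [X_ne_zero] using congrArg (killY n) hx

lemma killX_ne_zero_of_mem_nonZeroDivisors [NeZero n] {p : Rring n}
    (hp : p ∈ nonZeroDivisors (Rring n)) : killX n p ≠ 0 := by
  intro h
  obtain ⟨i⟩ : Nonempty (Fin n) := inferInstance
  have hy : Ideal.Quotient.mk (relIdeal n) (X i.succ) = 0 :=
    mem_nonZeroDivisors_iff_right.1 hp _ (ext_killY_killX (by simp) (by simp [h]))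
  simpa [X_ne_zero] using congrArg (killX n) hy

end Rring

open Rring in
/-- For every integer `n ≥ 2` and all `p, q ∈ R_n` lying in the ideal generated by
`x̄, ȳ₁, …, ȳₙ`, the sequence `[p, q]` is not a (weakly) regular sequence on `R_n`:
it is impossible that `p` is a non-zero-divisor of `R_n` and the image of `q`
in `R_n/(p)` is a non-zero-divisor. -/
theorem no_regular_sequence_of_length_two (n : ℕ) (hn : 2 ≤ n) (p q : Rring n)
    (hp : p ∈ irrelevantIdeal n) (hq : q ∈ irrelevantIdeal n) :
    ¬ (p ∈ nonZeroDivisors (Rring n) ∧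
        Ideal.Quotient.mk (Ideal.span {p}) q ∈
          nonZeroDivisors (Rring n ⧸ Ideal.span {p})) := by
  have : NeZero n := ⟨by omega⟩
  rintro ⟨hp_reg, hq_reg⟩
  obtain ⟨r, hr⟩ : ∃ r, r * p = projX n p := by
    refine Ideal.mem_span_singleton'.1 (Ideal.mem_of_mul_mem_of_mk_mem_nonZeroDivisors hq_reg ?_)
    rw [mul_projX_comm hp hq]
    exact Ideal.mul_mem_right _ _ (Ideal.mem_span_singleton_self p)
  have hrY : killY n r = 1 := by
    have h := congrArg (killY n) hr
    rwa [map_mul, killY_projX, mul_eq_right₀ (killY_ne_zero_of_mem_nonZeroDivisors hp_reg)] at h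
  have hrX : killX n r = 0 := by
    have h := congrArg (killX n) hr
    rw [map_mul, killX_projX_of_mem hp] at h
    exact (mul_eq_zero.1 h).resolve_right (killX_ne_zero_of_mem_nonZeroDivisors hp_reg)
  simpa [hrY, hrX] using constantCoeff_killY_eq_constantCoeff_killX r
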